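/- arXiv:1001.2059 — 2 statements merged into one kernel-verified Lean document; each statement's English description precedes it below -/
import Mathlib

section
/- Let F be a field and N, T positive integers. For any N×T matrix X over F, any N×N matrix A over F, and any N×T matrix Z over F, setting Y = A X + Z, the subspace distance between the row space of X and the row space of Y satisfies d_S(⟨X⟩, ⟨Y⟩) ≤ (N − rank A) + 2 rank Z. -/
/-- The row space of a matrix: the subspace spanned by its rows. -/
noncomputable def rowSpace {F : Type*} [Field F] {m k : Type*} (X : Matrix m k F) :
    Submodule F (k → F) :=
  Submodule.span F (Set.range X)

/-- The subspace distance `d_S(U,V) = dim(U + V) - dim(U ∩ V)`. -/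
noncomputable def subspaceDist {F : Type*} [Field F] {k : Type*}
    (U V : Submodule F (k → F)) : ℕ :=
  Module.finrank F ↥(U ⊔ V) - Module.finrank F ↥(U ⊓ V)

open Module Submodule LinearMap in
private lemma rowSpace_mul_le {F : Type*} [Field F] {N T : ℕ}
    (A : Matrix (Fin N) (Fin N) F) (X : Matrix (Fin N) (Fin T) F) :
    rowSpace (A * X) ≤ rowSpace X := by
  rw [rowSpace, Submodule.span_le]
  rintro _ ⟨i, rfl⟩
  have : (A * X) i = ∑ j, A i j • X j := by
    ext k; simp [Matrix.mul_apply, Finset.sum_apply]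
  rw [this]
  exact Submodule.sum_mem _ fun j _ =>
    Submodule.smul_mem _ _ (Submodule.subset_span ⟨j, rfl⟩)

open Module Submodule LinearMap in
private lemma rowSpace_add_le {F : Type*} [Field F] {N T : ℕ}
    (B C : Matrix (Fin N) (Fin T) F) :
    rowSpace (B + C) ≤ rowSpace B ⊔ rowSpace C := by
  rw [rowSpace, Submodule.span_le]
  rintro _ ⟨i, rfl⟩
  have : (B + C) i = B i + C i := rfl
  rw [this]
  exact Submodule.add_mem _
    (Submodule.mem_sup_left (Submodule.subset_span ⟨i, rfl⟩))
    (Submodule.mem_sup_right (Submodule.subset_span ⟨i, rfl⟩))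

open Module Submodule LinearMap in
private lemma rowSpace_le_add_sup {F : Type*} [Field F] {N T : ℕ}
    (B C : Matrix (Fin N) (Fin T) F) :
    rowSpace B ≤ rowSpace (B + C) ⊔ rowSpace C := by
  rw [rowSpace, Submodule.span_le]
  rintro _ ⟨i, rfl⟩
  have : B i = (B + C) i - C i := by ext k; simp
  rw [this]
  exact Submodule.sub_mem _
    (Submodule.mem_sup_left (Submodule.subset_span ⟨i, rfl⟩))
    (Submodule.mem_sup_right (Submodule.subset_span ⟨i, rfl⟩))

open Module Submodule LinearMap in
private lemma finrank_rowSpace {F : Type*} [Field F] {N T : ℕ} (X : Matrix (Fin N) (Fin T) F) :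
    Module.finrank F (rowSpace X) = X.rank := by
  rw [Matrix.rank_eq_finrank_span_row]; rfl

open Module Submodule LinearMap in
private lemma sylvester {F : Type*} [Field F] {N T : ℕ}
    (A : Matrix (Fin N) (Fin N) F) (X : Matrix (Fin N) (Fin T) F) :
    A.rank + X.rank ≤ N + (A * X).rank := by
  set f := A.mulVecLin
  set g := X.mulVecLin
  have hAX : (A * X).rank = finrank F (Submodule.map f (LinearMap.range g)) := by
    rw [Matrix.rank, Matrix.mulVecLin_mul, LinearMap.range_comp]
  set h := f.domRestrict (LinearMap.range g)
  have hrn : finrank F (LinearMap.range h) + finrank F (LinearMap.ker h)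
      = finrank F (LinearMap.range g) := LinearMap.finrank_range_add_finrank_ker h
  have hrange : LinearMap.range h = Submodule.map f (LinearMap.range g) :=
    LinearMap.range_domRestrict _ _
  have hker : finrank F (LinearMap.ker h) ≤ finrank F (LinearMap.ker f) := by
    have hmap : Submodule.map (LinearMap.range g).subtype (LinearMap.ker h)
        ≤ LinearMap.ker f := by
      rintro _ ⟨x, hx, rfl⟩
      exact hx
    calc finrank F (LinearMap.ker h)
        = finrank F (Submodule.map (LinearMap.range g).subtype (LinearMap.ker h)) :=
          LinearEquiv.finrank_eq
            (Submodule.equivMapOfInjective _ (Submodule.injective_subtype _) _)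
      _ ≤ finrank F (LinearMap.ker f) := Submodule.finrank_mono hmap
  have hA : A.rank + finrank F (LinearMap.ker f) = N := by
    have := LinearMap.finrank_range_add_finrank_ker f
    simpa [Matrix.rank, Module.finrank_pi] using this
  have hX : X.rank = finrank F (LinearMap.range g) := rfl
  rw [hrange] at hrn
  omega

open Module in
/-- For `Y = A X + Z`, one has `d_S(⟨X⟩, ⟨Y⟩) ≤ (N - rank A) + 2 rank Z`. -/
theorem subspaceDist_channel_le
    {F : Type*} [Field F] (N T : ℕ) (hN : 0 < N) (hT : 0 < T)
    (X : Matrix (Fin N) (Fin T) F) (A : Matrix (Fin N) (Fin N) F)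
    (Z : Matrix (Fin N) (Fin T) F)
    (Y : Matrix (Fin N) (Fin T) F) (hY : Y = A * X + Z) :
    subspaceDist (rowSpace X) (rowSpace Y) ≤ (N - A.rank) + 2 * Z.rank := by
  subst hY
  set U := rowSpace X
  set V := rowSpace (A * X + Z)
  set W := rowSpace (A * X)
  set Zs := rowSpace Z
  have hWU : W ≤ U := rowSpace_mul_le A X
  have hVWZ : V ≤ W ⊔ Zs := rowSpace_add_le (A * X) Z
  have hWVZ : W ≤ V ⊔ Zs := rowSpace_le_add_sup (A * X) Z
  have e1 : finrank F ↥(U ⊔ V) + finrank F ↥(U ⊓ V)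
      = finrank F U + finrank F V := Submodule.finrank_sup_add_finrank_inf_eq U V
  set P := W ⊔ V with hP
  have e2 : finrank F ↥(U ⊔ P) + finrank F ↥(U ⊓ P)
      = finrank F U + finrank F P := Submodule.finrank_sup_add_finrank_inf_eq U P
  have h3 : U ⊔ P = U ⊔ V := by
    rw [hP, ← sup_assoc, sup_of_le_left hWU]
  rw [h3] at e2
  have h4 : finrank F W ≤ finrank F ↥(U ⊓ P) :=
    Submodule.finrank_mono (le_inf hWU le_sup_left)
  have e3 : finrank F ↥(V ⊔ Zs) + finrank F ↥(V ⊓ Zs)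
      = finrank F V + finrank F Zs := Submodule.finrank_sup_add_finrank_inf_eq V Zs
  have h5 : finrank F P ≤ finrank F ↥(V ⊔ Zs) :=
    Submodule.finrank_mono (sup_le hWVZ le_sup_left)
  have e4 : finrank F ↥(U ⊔ Zs) + finrank F ↥(U ⊓ Zs)
      = finrank F U + finrank F Zs := Submodule.finrank_sup_add_finrank_inf_eq U Zs
  have h6 : finrank F ↥(U ⊔ V) ≤ finrank F ↥(U ⊔ Zs) :=
    Submodule.finrank_mono (sup_le le_sup_left (hVWZ.trans (sup_le (hWU.trans le_sup_left) le_sup_right)))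
  have h7 : A.rank + X.rank ≤ N + (A * X).rank := sylvester A X
  have h8 : A.rank ≤ N := Matrix.rank_le_height A
  have hU : finrank F U = X.rank := finrank_rowSpace X
  have hW : finrank F W = (A * X).rank := finrank_rowSpace (A * X)
  have hZ : finrank F Zs = Z.rank := finrank_rowSpace Z
  rw [subspaceDist]
  omega
end

section
/- Let F be a field, N, M, n positive integers, and T = N + M. Let 𝓡 be a nonempty set of n-tuples of N×M matrices over F, and let ⟨𝓘(𝓡)⟩ = { (⟨[I|U_0]⟩,…,⟨[I|U_{n−1}]⟩) : (U_0,…,U_{n−1}) ∈ 𝓡 } be the subspace code obtained from the lifted multishot matrix code. Then the map (U_0,…,U_{n−1}) ↦ (⟨[I|U_0]⟩,…,⟨[I|U_{n−1}]⟩) is injective on 𝓡 (so |⟨𝓘(𝓡)⟩| = |𝓡|), and if 𝓡 contains at least two elements, the minimum extended subspace distance of ⟨𝓘(𝓡)⟩ equals twice the minimum extended rank distance of 𝓡: min over distinct pairs in 𝓡 of Σ_{j} d_S(⟨[I|U_j]⟩, ⟨[I|V_j]⟩) = 2 · min over distinct pairs in 𝓡 of Σ_j rank(V_j − U_j). -/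
/-- The lifting `[I | U]` of an `N × M` matrix `U`. -/
def lifting {F : Type*} [Field F] {N M : ℕ} (U : Matrix (Fin N) (Fin M) F) :
    Matrix (Fin N) (Fin (N + M)) F :=
  (Matrix.fromCols (1 : Matrix (Fin N) (Fin N) F) U).submatrix id finSumFinEquiv.symm

/-!
The row space of `[I | U]` is the graph `{(x, x U)}` of `x ↦ x U`, of dimension `N`. Two such
graphs meet in the graph of `U` over `ker (x ↦ x (V - U))`, of dimension `N - rank (V - U)`, so
`d_S = 2N - 2 (N - rank (V - U)) = 2 rank (V - U)`. Summed over the shots, the extended subspace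
distance is twice the extended rank distance for every pair of codewords, hence so are the minima;
and distance `0` forces equal matrices, which gives injectivity.
-/

open Matrix Module

section Distance

variable {F : Type*} [Field F] {k : Type*}

theorem subspaceDist_self (U : Submodule F (k → F)) : subspaceDist U U = 0 := by
  rw [subspaceDist, sup_idem, inf_idem, Nat.sub_self]

theorem subspaceDist_add_two_mul_finrank_inf [Finite k] (U V : Submodule F (k → F)) :
    subspaceDist U V + 2 * finrank F ↥(U ⊓ V) = finrank F U + finrank F V := by
  have hsum := Submodule.finrank_sup_add_finrank_inf_eq U V
  have hle := Submodule.finrank_mono (inf_le_sup : U ⊓ V ≤ U ⊔ V)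
  rw [subspaceDist]
  omega

end Distance

section Rank

variable {F : Type*} [Field F] {m n : Type*} [Fintype n]

theorem Matrix.rank_eq_zero_iff (A : Matrix m n F) : A.rank = 0 ↔ A = 0 := by
  classical
  rw [Matrix.rank, Submodule.finrank_eq_zero, LinearMap.range_eq_bot, ← Matrix.toLin'_apply',
    LinearEquiv.map_eq_zero_iff]

theorem Matrix.finrank_ker_vecMulLinear [Fintype m] (A : Matrix m n F) :
    finrank F ↥(LinearMap.ker A.vecMulLinear) = Fintype.card m - A.rank := by
  have hrange : finrank F ↥(LinearMap.range A.vecMulLinear) = A.rank := by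
    rw [← mulVecLin_transpose, ← rank, rank_transpose]
  have h := LinearMap.finrank_range_add_finrank_ker A.vecMulLinear
  rw [hrange, finrank_fintype_fun_eq_card] at h
  omega

end Rank

theorem Nat.sInf_image_mul_left {S : Set ℕ} (hS : S.Nonempty) (c : ℕ) :
    sInf ((c * ·) '' S) = c * sInf S :=
  ((mul_right_mono : Monotone (c * ·)).map_isLeast ⟨Nat.sInf_mem hS, fun _ => Nat.sInf_le⟩).csInf_eq

section Lifting

variable {F : Type*} [Field F] {N M : ℕ}

theorem vecMul_lifting (U : Matrix (Fin N) (Fin M) F) (x : Fin N → F) :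
    x ᵥ* lifting U = Sum.elim x (x ᵥ* U) ∘ finSumFinEquiv.symm := by
  rw [lifting, ← Equiv.coe_refl, submatrix_vecMul_equiv, vecMul_fromCols, vecMul_one]
  rfl

theorem vecMul_lifting_eq_iff {U V : Matrix (Fin N) (Fin M) F} {x y : Fin N → F} :
    x ᵥ* lifting U = y ᵥ* lifting V ↔ x = y ∧ x ᵥ* U = y ᵥ* V := by
  rw [vecMul_lifting, vecMul_lifting, finSumFinEquiv.symm.surjective.injective_comp_right.eq_iff,
    Sum.elim_eq_iff]

theorem injective_vecMulLinear_lifting (U : Matrix (Fin N) (Fin M) F) :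
    Function.Injective (lifting U).vecMulLinear :=
  fun _ _ h => (vecMul_lifting_eq_iff.mp h).1

theorem rowSpace_lifting_eq_range (U : Matrix (Fin N) (Fin M) F) :
    rowSpace (lifting U) = LinearMap.range (lifting U).vecMulLinear :=
  (range_vecMulLinear _).symm

theorem finrank_rowSpace_lifting (U : Matrix (Fin N) (Fin M) F) :
    finrank F ↥(rowSpace (lifting U)) = N := by
  rw [rowSpace_lifting_eq_range, LinearMap.finrank_range_of_inj (injective_vecMulLinear_lifting U),
    finrank_fin_fun]

theorem rowSpace_lifting_inf (U V : Matrix (Fin N) (Fin M) F) :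
    rowSpace (lifting U) ⊓ rowSpace (lifting V) =
      (LinearMap.ker (V - U).vecMulLinear).map (lifting U).vecMulLinear := by
  ext w
  simp only [rowSpace_lifting_eq_range, Submodule.mem_inf, LinearMap.mem_range, Submodule.mem_map,
    LinearMap.mem_ker, vecMulLinear_apply, vecMul_sub, sub_eq_zero]
  constructor
  · rintro ⟨⟨x, rfl⟩, y, hy⟩
    obtain ⟨rfl, hyx⟩ := vecMul_lifting_eq_iff.mp hy
    exact ⟨y, hyx, rfl⟩
  · rintro ⟨x, hx, rfl⟩
    exact ⟨⟨x, rfl⟩, x, vecMul_lifting_eq_iff.mpr ⟨rfl, hx⟩⟩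

theorem finrank_rowSpace_lifting_inf (U V : Matrix (Fin N) (Fin M) F) :
    finrank F ↥(rowSpace (lifting U) ⊓ rowSpace (lifting V)) = N - (V - U).rank := by
  rw [rowSpace_lifting_inf, ← ((LinearMap.ker _).equivMapOfInjective _
    (injective_vecMulLinear_lifting U)).finrank_eq, finrank_ker_vecMulLinear, Fintype.card_fin]

theorem subspaceDist_rowSpace_lifting (U V : Matrix (Fin N) (Fin M) F) :
    subspaceDist (rowSpace (lifting U)) (rowSpace (lifting V)) = 2 * (V - U).rank := by
  have h := subspaceDist_add_two_mul_finrank_inf (rowSpace (lifting U)) (rowSpace (lifting V))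
  rw [finrank_rowSpace_lifting_inf, finrank_rowSpace_lifting, finrank_rowSpace_lifting] at h
  have := (V - U).rank_le_height
  omega

theorem rowSpace_lifting_injective :
    Function.Injective fun U : Matrix (Fin N) (Fin M) F => rowSpace (lifting U) := by
  intro U V h
  have h0 := subspaceDist_rowSpace_lifting U V
  rw [show rowSpace (lifting U) = rowSpace (lifting V) from h, subspaceDist_self] at h0
  exact (sub_eq_zero.mp ((V - U).rank_eq_zero_iff.mp (by omega))).symm

end Lifting

theorem lifted_multishot_code_properties_general
    {F : Type*} [Field F] (N M n : ℕ)
    (𝓡 : Set (Fin n → Matrix (Fin N) (Fin M) F)) :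
    Set.InjOn
      (fun U : Fin n → Matrix (Fin N) (Fin M) F => fun j : Fin n => rowSpace (lifting (U j)))
      𝓡 ∧
    ((∃ U ∈ 𝓡, ∃ V ∈ 𝓡, U ≠ V) →
      sInf {d : ℕ | ∃ U ∈ 𝓡, ∃ V ∈ 𝓡, U ≠ V ∧
          d = ∑ j : Fin n, subspaceDist (rowSpace (lifting (U j))) (rowSpace (lifting (V j)))}
        = 2 * sInf {d : ℕ | ∃ U ∈ 𝓡, ∃ V ∈ 𝓡, U ≠ V ∧
          d = ∑ j : Fin n, (V j - U j).rank}) := by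
  refine ⟨fun U _ V _ h => funext fun j => rowSpace_lifting_injective (congr_fun h j), ?_⟩
  rintro ⟨U, hU, V, hV, hUV⟩
  set rankDistances := {d : ℕ | ∃ U ∈ 𝓡, ∃ V ∈ 𝓡, U ≠ V ∧ d = ∑ j : Fin n, (V j - U j).rank}
  have hne : rankDistances.Nonempty := ⟨_, U, hU, V, hV, hUV, rfl⟩
  simp only [subspaceDist_rowSpace_lifting, ← Finset.mul_sum]
  rw [← Nat.sInf_image_mul_left hne]
  congr 1
  ext d
  simp [rankDistances, eq_comm, and_assoc]

/-- Lifting a multishot rank-metric code is injective, and the resulting multishot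
subspace code has minimum extended subspace distance equal to twice the minimum
extended rank distance of the original code. -/
theorem lifted_multishot_code_properties
    {F : Type*} [Field F] (N M n : ℕ) (hN : 0 < N) (hM : 0 < M) (hn : 0 < n)
    (𝓡 : Set (Fin n → Matrix (Fin N) (Fin M) F)) (h𝓡 : 𝓡.Nonempty) :
    Set.InjOn
      (fun U : Fin n → Matrix (Fin N) (Fin M) F => fun j : Fin n => rowSpace (lifting (U j)))
      𝓡 ∧
    ((∃ U ∈ 𝓡, ∃ V ∈ 𝓡, U ≠ V) →
      sInf {d : ℕ | ∃ U ∈ 𝓡, ∃ V ∈ 𝓡, U ≠ V ∧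
          d = ∑ j : Fin n, subspaceDist (rowSpace (lifting (U j))) (rowSpace (lifting (V j)))}
        = 2 * sInf {d : ℕ | ∃ U ∈ 𝓡, ∃ V ∈ 𝓡, U ≠ V ∧
          d = ∑ j : Fin n, (V j - U j).rank}) :=
  lifted_multishot_code_properties_general N M n 𝓡
end
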